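/- Let (CM, d) be a chain complex of Λ-modules over a field Λ, let CF be a Λ-vector space, and let PSS : CM → CF, SSP : CF → CM, ι : CM → CM, h : CM → CM be Λ-linear maps such that (i) ι∘d = d∘ι, (ii) ι is a Λ-module isomorphism, and (iii) ι − SSP∘PSS = d∘h + h∘d. If c₁,…,c_k ∈ CM are cycles (d c_i = 0) whose homology classes are linearly independent over Λ, then PSS(c₁),…,PSS(c_k) ∈ CF are Λ-linearly independent. -/

import Mathlib

/-! A relation `∑ λᵢ • PSS cᵢ = 0` makes `x = ∑ λᵢ • cᵢ` a cycle killed by `SSP ∘ PSS`. The chain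
homotopy `ι - SSP ∘ PSS = d h + h d` then shows `ι x = d (h x)` is a boundary, and since `ι` is a
chain isomorphism, `x` itself is a boundary, so every `λᵢ` vanishes. -/

namespace LinearMap

variable {R M N : Type*} [Semiring R] [AddCommGroup M] [Module R M] [AddCommGroup N] [Module R N]

theorem sub_mem_range_of_homotopy {f g : M →ₗ[R] M} {d h : M →ₗ[R] M}
    (hhom : f - g = d ∘ₗ h + h ∘ₗ d) {x : M} (hx : d x = 0) : f x - g x ∈ range d :=
  ⟨h x, by simpa [hx] using (LinearMap.congr_fun hhom x).symm⟩

theorem mem_range_of_apply_mem_range {d : M →ₗ[R] N} {ιM : M →ₗ[R] M} {ιN : N →ₗ[R] N}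
    (hchain : ιN ∘ₗ d = d ∘ₗ ιM) (hsurj : Function.Surjective ιM)
    (hinj : Function.Injective ιN) {x : N} (hx : ιN x ∈ range d) : x ∈ range d := by
  obtain ⟨y, hy⟩ := hx
  obtain ⟨z, rfl⟩ := hsurj y
  exact ⟨z, hinj <| by rw [← hy, ← comp_apply, hchain, comp_apply]⟩

end LinearMap

theorem stmt_4_general {Λ : Type} [Field Λ] {CM CF : Type}
    [AddCommGroup CM] [Module Λ CM] [AddCommGroup CF] [Module Λ CF]
    (d : CM →ₗ[Λ] CM)
    (PSS : CM →ₗ[Λ] CF) (SSP : CF →ₗ[Λ] CM) (ι h : CM →ₗ[Λ] CM)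
    (hchain : ι ∘ₗ d = d ∘ₗ ι)
    (hiso : Function.Bijective ι)
    (hhom : ι - SSP ∘ₗ PSS = d ∘ₗ h + h ∘ₗ d)
    (k : ℕ) (c : Fin k → CM) (hc : ∀ i, d (c i) = 0)
    (hind : ∀ lam : Fin k → Λ,
      (∑ i, lam i • c i) ∈ LinearMap.range d → ∀ i, lam i = 0) :
    LinearIndependent Λ (fun i => PSS (c i)) := by
  rw [Fintype.linearIndependent_iff]
  intro lam hlam
  set x := ∑ i, lam i • c i
  have hcycle : d x = 0 := by simp [x, map_sum, hc]
  have hPSS : PSS x = 0 := by simpa [x, map_sum] using hlam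
  have hιx : ι x ∈ LinearMap.range d := by
    simpa [hPSS] using LinearMap.sub_mem_range_of_homotopy hhom hcycle
  exact hind lam (LinearMap.mem_range_of_apply_mem_range hchain hiso.2 hiso.1 hιx)

/-- Algebraic core of the Arnold-conjecture deduction: given `Λ`-linear maps
`PSS : CM → CF`, `SSP : CF → CM`, `ι, h : CM → CM` on a chain complex
`(CM, d)` such that `ι` is a chain map, `ι` is an isomorphism, and
`ι − SSP∘PSS = d∘h + h∘d`, any cycles `c₁,…,c_k` whose homology classes are
linearly independent are mapped by `PSS` to `Λ`-linearly independent elements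
of `CF`. -/
theorem stmt_4 {Λ : Type} [Field Λ] {CM CF : Type}
    [AddCommGroup CM] [Module Λ CM] [AddCommGroup CF] [Module Λ CF]
    (d : CM →ₗ[Λ] CM) (hd : d ∘ₗ d = 0)
    (PSS : CM →ₗ[Λ] CF) (SSP : CF →ₗ[Λ] CM) (ι h : CM →ₗ[Λ] CM)
    (hchain : ι ∘ₗ d = d ∘ₗ ι)
    (hiso : Function.Bijective ι)
    (hhom : ι - SSP ∘ₗ PSS = d ∘ₗ h + h ∘ₗ d)
    (k : ℕ) (c : Fin k → CM) (hc : ∀ i, d (c i) = 0)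
    (hind : ∀ lam : Fin k → Λ,
      (∑ i, lam i • c i) ∈ LinearMap.range d → ∀ i, lam i = 0) :
    LinearIndependent Λ (fun i => PSS (c i)) :=
  stmt_4_general d PSS SSP ι h hchain hiso hhom k c hc hind
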